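/- arXiv:2005.08794 — 5 statements merged into one kernel-verified Lean document; each statement's English description precedes it below -/
import Mathlib

section
/- For a finite tree t with n nodes and a node u, the number of histories of t rooted at u (i.e., orderings v_1,...,v_n of the vertices with v_1 = u such that the induced subgraph on {v_1,...,v_k} is connected for every k) equals (n-1)! divided by the product over all nodes v ≠ u of the size of the subtree rooted at v when t is viewed as rooted at u. -/
open scoped Classical
open SimpleGraph Finset

variable {V : Type*}

/-- A history of a graph `G`: an ordering of all vertices (no repeats) such that
every nonempty prefix induces a connected subgraph. -/
def IsHistory (G : SimpleGraph V) (l : List V) : Prop :=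
  l.Nodup ∧ (∀ v : V, v ∈ l) ∧ ∀ k : ℕ, 1 ≤ k → (G.induce {v | v ∈ l.take k}).Connected

/-- Number of histories of `G` rooted at (i.e. starting with) `u`. -/
noncomputable def nHist (G : SimpleGraph V) (u : V) : ℕ :=
  Nat.card {l : List V // IsHistory G l ∧ l.head? = some u}

/-- Total number of histories of `G`. -/
noncomputable def nHistAll (G : SimpleGraph V) : ℕ :=
  Nat.card {l : List V // IsHistory G l}

/-- Size of the subtree of `G` rooted at `v` away from `u`: the number of vertices `w`
such that every walk from `w` to `u` passes through `v`. -/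
noncomputable def subtreeSize (G : SimpleGraph V) (u v : V) : ℕ :=
  Nat.card {w : V | ∀ p : G.Walk w u, v ∈ p.support}

/-!
Rooting the tree at `u` makes it a poset, `v ≤ w` meaning that `v` lies on the path from `w`
to `u`, in which the elements below any vertex form a chain. A vertex set containing `u`
induces a connected subgraph iff it is a lower set, so histories rooted at `u` are exactly
the linear extensions of this poset.

For such forest posets the hook length formula `e(s) * ∏ v ∈ s, h(v) = (#s)!`, where `h(v)`
counts the elements of `s` above `v`, follows by induction on `s` by removing the first entry
`a` of a linear extension: `a` is minimal, its removal leaves the other hook lengths unchanged,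
and the hooks of the minimal elements partition `s`, so `∑ h(a) = #s`. The root's hook is the
whole vertex set, which turns `n!` into `(n - 1)!`.
-/

section LinearExtension

variable {α : Type*}

lemma nodup_of_pairwise_not_ge [Preorder α] {l : List α} (hl : l.Pairwise fun a b => ¬ b ≤ a) :
    l.Nodup :=
  hl.imp fun h => by rintro rfl; exact h le_rfl

lemma head?_eq_of_pairwise_not_ge [LE α] {l : List α} {u : α}
    (hl : l.Pairwise fun a b => ¬ b ≤ a) (hu : u ∈ l) (hbot : IsBot u) : l.head? = some u := by
  obtain _ | ⟨a, t⟩ := l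
  · simp at hu
  · rw [List.pairwise_cons] at hl
    rcases List.mem_cons.1 hu with rfl | hu
    · rfl
    · exact absurd (hbot a) (hl.1 u hu)

lemma pairwise_not_ge_iff_isLowerSet_take [LE α] {l : List α} (hl : l.Nodup)
    (hcover : ∀ x, x ∈ l) :
    l.Pairwise (fun a b => ¬ b ≤ a) ↔ ∀ k, IsLowerSet {x | x ∈ l.take k} := by
  constructor
  · intro h k w v hvw hw
    by_contra hv
    have hv' := hcover v
    rw [← List.take_append_drop k l, List.mem_append] at hv'
    exact h.rel_of_mem_take_of_mem_drop hw (hv'.resolve_left hv) hvw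
  · intro h
    rw [List.pairwise_iff_getElem]
    intro i j hi hj hij hji
    have hmem : l[j] ∈ l.take j := h j hji (List.mem_take_iff_getElem.2 ⟨i, by omega, rfl⟩)
    exact List.disjoint_take_drop hl le_rfl hmem
      (List.mem_drop_iff_getElem.2 ⟨0, by omega, by simp⟩)

variable [PartialOrder α]

noncomputable def linearExtensions (s : Finset α) : Finset (List α) :=
  {l ∈ s.toList.permutations.toFinset | l.Pairwise fun a b => ¬ b ≤ a}

lemma mem_linearExtensions {s : Finset α} {l : List α} :
    l ∈ linearExtensions s ↔ (l.Pairwise fun a b => ¬ b ≤ a) ∧ ∀ x, x ∈ l ↔ x ∈ s := by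
  rw [linearExtensions, mem_filter, List.mem_toFinset, List.mem_permutations, and_comm]
  refine and_congr_right fun hl => ?_
  simp [List.perm_ext_iff_of_nodup (nodup_of_pairwise_not_ge hl) s.nodup_toList]

lemma cons_mem_linearExtensions {s : Finset α} {a : α} {l : List α} :
    a :: l ∈ linearExtensions s ↔
      Minimal (· ∈ s) a ∧ l ∈ linearExtensions (s.erase a) := by
  simp only [mem_linearExtensions, List.pairwise_cons, List.mem_cons, mem_erase, Minimal]
  grind

lemma nil_notMem_linearExtensions {s : Finset α} (hs : s.Nonempty) :
    [] ∉ linearExtensions s := by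
  obtain ⟨x, hx⟩ := hs
  exact fun h => List.not_mem_nil ((mem_linearExtensions.1 h).2 x |>.2 hx)

lemma card_linearExtensions_eq_sum_minimal {s : Finset α} (hs : s.Nonempty) :
    #(linearExtensions s) =
      ∑ a ∈ s with Minimal (· ∈ s) a, #(linearExtensions (s.erase a)) := by
  have hsplit : linearExtensions s = {a ∈ s | Minimal (· ∈ s) a}.biUnion
      fun a => (linearExtensions (s.erase a)).map ⟨List.cons a, List.cons_injective⟩ := by
    ext (_ | ⟨a, l⟩)
    · simp [nil_notMem_linearExtensions hs]
    · simp +contextual [cons_mem_linearExtensions, Minimal.prop]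
  rw [hsplit, card_biUnion]
  · simp only [card_map]
  · intro a _ b _ hab
    simp only [Function.onFun, Finset.disjoint_left, mem_map, Function.Embedding.coeFn_mk]
    rintro _ ⟨l, -, rfl⟩ ⟨l', -, h⟩
    exact hab (List.cons.inj h).1.symm

noncomputable def hookLength (s : Finset α) (v : α) : ℕ := #{w ∈ s | v ≤ w}

lemma hookLength_erase_of_minimal {s : Finset α} {a v : α} (ha : Minimal (· ∈ s) a)
    (hv : v ∈ s.erase a) : hookLength (s.erase a) v = hookLength s v := by
  rw [hookLength, hookLength, filter_erase, erase_eq_of_notMem]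
  simp only [mem_filter, not_and]
  intro _ hva
  exact (mem_erase.1 hv).1 (ha.eq_of_le (mem_of_mem_erase hv) hva)

lemma sum_hookLength_minimal_eq_card (hforest : ∀ a : α, IsChain (· ≤ ·) (Set.Iic a))
    (s : Finset α) :
    ∑ a ∈ s with Minimal (· ∈ s) a, hookLength s a = #s := by
  have hcover : {a ∈ s | Minimal (· ∈ s) a}.biUnion (fun a => {w ∈ s | a ≤ w}) = s := by
    ext w
    simp only [mem_biUnion, mem_filter]
    refine ⟨fun ⟨_, _, hw, _⟩ => hw, fun hw => ?_⟩
    obtain ⟨a, haw, ha⟩ := s.exists_le_minimal hw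
    exact ⟨a, ⟨ha.prop, ha⟩, hw, haw⟩
  conv_rhs => rw [← hcover]
  rw [card_biUnion]
  · rfl
  · intro a ha b hb hab
    simp only [Function.onFun, Finset.disjoint_left, mem_filter]
    rintro w ⟨-, haw⟩ ⟨-, hbw⟩
    rcases (hforest w).total haw hbw with h | h
    · exact hab ((mem_filter.1 hb).2.eq_of_le (mem_filter.1 ha).1 h)
    · exact hab ((mem_filter.1 ha).2.eq_of_le (mem_filter.1 hb).1 h).symm

theorem card_linearExtensions_mul_prod_hookLength
    (hforest : ∀ a : α, IsChain (· ≤ ·) (Set.Iic a)) (s : Finset α) :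
    #(linearExtensions s) * ∏ v ∈ s, hookLength s v = (#s).factorial := by
  induction s using Finset.strongInduction with
  | H s ih =>
  rcases s.eq_empty_or_nonempty with rfl | hs
  · simp [linearExtensions, filter_singleton]
  have hterm : ∀ a ∈ s, Minimal (· ∈ s) a →
      #(linearExtensions (s.erase a)) * ∏ v ∈ s, hookLength s v =
        (#s - 1).factorial * hookLength s a := by
    intro a ha hmin
    rw [← mul_prod_erase s _ ha,
      ← prod_congr rfl fun v hv => hookLength_erase_of_minimal hmin hv,
      ← card_erase_of_mem ha, ← ih _ (erase_ssubset ha)]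
    ring
  rw [card_linearExtensions_eq_sum_minimal hs, sum_mul,
    sum_congr rfl fun a ha => hterm a (mem_filter.1 ha).1 (mem_filter.1 ha).2, ← mul_sum,
    sum_hookLength_minimal_eq_card hforest, ← Nat.mul_factorial_pred hs.card_pos.ne']
  ring

end LinearExtension

namespace SimpleGraph

variable {G : SimpleGraph V}

lemma IsAcyclic.mem_support_iff_support_suffix (hG : G.IsAcyclic) {u v w : V}
    {P : G.Walk w u} {Q : G.Walk v u} (hP : P.IsPath) (hQ : Q.IsPath) :
    v ∈ P.support ↔ Q.support <:+ P.support := by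
  refine ⟨fun hv => ?_, fun h => h.subset Q.start_mem_support⟩
  obtain rfl : P.dropUntil v hv = Q :=
    congrArg Subtype.val ((hG.subsingleton_path v u).elim ⟨_, hP.dropUntil hv⟩ ⟨Q, hQ⟩)
  exact P.support_dropUntil_suffix_support hv

lemma IsAcyclic.forall_walk_mem_support_iff (hG : G.IsAcyclic) {u v w : V} {P : G.Walk w u}
    (hP : P.IsPath) : (∀ p : G.Walk w u, v ∈ p.support) ↔ v ∈ P.support := by
  refine ⟨fun h => h P, fun hv p => p.support_bypass_subset_support ?_⟩
  obtain rfl : p.bypass = P :=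
    congrArg Subtype.val ((hG.subsingleton_path w u).elim ⟨_, p.bypass_isPath⟩ ⟨P, hP⟩)
  exact hv

namespace IsTree

noncomputable def rootPath (hG : G.IsTree) (u w : V) : G.Walk w u :=
  (hG.connected.exists_isPath w u).choose

lemma rootPath_isPath (hG : G.IsTree) (u w : V) : (hG.rootPath u w).IsPath :=
  (hG.connected.exists_isPath w u).choose_spec

lemma forall_walk_mem_support_iff_suffix (hG : G.IsTree) {u v w : V} :
    (∀ p : G.Walk w u, v ∈ p.support) ↔
      (hG.rootPath u v).support <:+ (hG.rootPath u w).support :=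
  (hG.isAcyclic.forall_walk_mem_support_iff (hG.rootPath_isPath u w)).trans
    (hG.isAcyclic.mem_support_iff_support_suffix (hG.rootPath_isPath u w) (hG.rootPath_isPath u v))

abbrev rootedOrder (hG : G.IsTree) (u : V) : PartialOrder V where
  le v w := ∀ p : G.Walk w u, v ∈ p.support
  le_refl v p := p.start_mem_support
  le_trans a b c hab hbc := by
    rw [hG.forall_walk_mem_support_iff_suffix] at hab hbc ⊢
    exact hab.trans hbc
  le_antisymm v w hvw hwv := by
    rw [hG.forall_walk_mem_support_iff_suffix] at hvw hwv
    have h := hvw.eq_of_length (hvw.length_le.antisymm hwv.length_le)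
    rw [← Walk.cons_tail_support, ← Walk.cons_tail_support (hG.rootPath u w)] at h
    exact (List.cons.inj h).1

lemma rootedOrder_le_iff (hG : G.IsTree) {u v w : V} :
    letI := hG.rootedOrder u
    v ≤ w ↔ v ∈ (hG.rootPath u w).support :=
  hG.isAcyclic.forall_walk_mem_support_iff (hG.rootPath_isPath u w)

lemma root_le (hG : G.IsTree) (u w : V) :
    letI := hG.rootedOrder u
    u ≤ w :=
  fun p => p.end_mem_support

lemma isChain_Iic (hG : G.IsTree) (u w : V) :
    letI := hG.rootedOrder u
    IsChain (· ≤ ·) (Set.Iic w) := by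
  intro v hv v' hv' _
  exact (List.suffix_or_suffix_of_suffix (hG.forall_walk_mem_support_iff_suffix.1 hv)
    (hG.forall_walk_mem_support_iff_suffix.1 hv')).imp
      hG.forall_walk_mem_support_iff_suffix.2 hG.forall_walk_mem_support_iff_suffix.2

lemma induce_connected_iff_isLowerSet (hG : G.IsTree) {u : V} {S : Set V} (hu : u ∈ S) :
    letI := hG.rootedOrder u
    (G.induce S).Connected ↔ IsLowerSet S := by
  refine ⟨fun hS w v hvw hw => ?_, fun hS => induce_connected_of_patches u hu fun {w} hw => ?_⟩
  · obtain ⟨q⟩ := hS.preconnected ⟨w, hw⟩ ⟨u, hu⟩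
    have hv := hvw (q.map (Embedding.induce S).toHom)
    obtain ⟨x, -, rfl⟩ := List.mem_map.1 (Walk.support_map _ q ▸ hv)
    exact x.2
  · refine ⟨{x | x ∈ (hG.rootPath u w).support},
      fun x hx => hS (hG.rootedOrder_le_iff.2 hx) hw,
      Walk.end_mem_support _, Walk.start_mem_support _, ?_⟩
    exact (Walk.connected_induce_support _).preconnected _ _

lemma subtreeSize_eq_hookLength [Fintype V] (hG : G.IsTree) (u v : V) :
    letI := hG.rootedOrder u
    subtreeSize G u v = hookLength univ v := by
  rw [subtreeSize, Nat.card_eq_card_toFinset]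
  unfold hookLength
  congr 1
  ext w
  simp only [Set.mem_toFinset, Set.mem_ofPred_eq, mem_filter, mem_univ, true_and]
  rfl

lemma isHistory_and_head?_eq_iff [Fintype V] (hG : G.IsTree) (u : V) (l : List V) :
    letI := hG.rootedOrder u
    IsHistory G l ∧ l.head? = some u ↔ l ∈ linearExtensions univ := by
  let _ := hG.rootedOrder u
  have root_mem_take {k : ℕ} (hhead : l.head? = some u) (hk : 1 ≤ k) : u ∈ l.take k :=
    List.mem_of_mem_head? (by rwa [List.head?_take, if_neg (by omega)])
  simp only [mem_linearExtensions, mem_univ, iff_true]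
  constructor
  · rintro ⟨⟨hnd, hcover, hconn⟩, hhead⟩
    refine ⟨(pairwise_not_ge_iff_isLowerSet_take hnd hcover).2 fun k => ?_, hcover⟩
    rcases Nat.eq_zero_or_pos k with rfl | hk
    · simp [isLowerSet_empty]
    · exact (hG.induce_connected_iff_isLowerSet (root_mem_take hhead hk)).1 (hconn k hk)
  · rintro ⟨hpw, hcover⟩
    have hnd := nodup_of_pairwise_not_ge hpw
    have hhead := head?_eq_of_pairwise_not_ge hpw (hcover u) (hG.root_le u)
    refine ⟨⟨hnd, hcover, fun k hk => ?_⟩, hhead⟩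
    exact (hG.induce_connected_iff_isLowerSet (root_mem_take hhead hk)).2
      ((pairwise_not_ge_iff_isLowerSet_take hnd hcover).1 hpw k)

end IsTree

end SimpleGraph

theorem stmt0 [Fintype V] [DecidableEq V] (G : SimpleGraph V) (hG : G.IsTree) (u : V) :
    nHist G u * ∏ v ∈ Finset.univ.erase u, subtreeSize G u v =
      Nat.factorial (Fintype.card V - 1) := by
  let _ := hG.rootedOrder u
  have : Nonempty V := hG.connected.nonempty
  have hcount : nHist G u = #(linearExtensions (univ : Finset V)) := by
    rw [nHist, Nat.card_congr (Equiv.subtypeEquivRight (hG.isHistory_and_head?_eq_iff u)),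
      Nat.card_eq_finsetCard]
  have hroot : hookLength (univ : Finset V) u = Fintype.card V := by
    simp [hookLength, hG.root_le u]
  have key := card_linearExtensions_mul_prod_hookLength (hG.isChain_Iic u) univ
  rw [← mul_prod_erase univ _ (mem_univ u), hroot, card_univ,
    ← Nat.mul_factorial_pred Fintype.card_pos.ne'] at key
  rw [hcount, prod_congr rfl fun v _ => hG.subtreeSize_eq_hookLength u v]
  exact Nat.eq_of_mul_eq_mul_left Fintype.card_pos (by rw [← key]; ring)
end

section
/- For a finite tree t on n vertices rooted at u, and any non-root node v with parent pa(v), the number of histories of t rooted at v equals the number of histories rooted at pa(v) multiplied by n_v^{(u)} / (n - n_v^{(u)}), where n_v^{(u)} is the size of the subtree of t rooted at v away from u. -/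
/-!
Cut the edge between `v` and its parent `p`: it separates the subtree `A` of `v`, of size
`m = n_v`, from its complement, of size `n - m`, and no other edge joins the two sides. A list
starting at `v` is a history of the tree iff its restrictions to `A` and to `Aᶜ` are histories of
these induced subtrees rooted at `v` and at `p`: the first vertex outside `A` to appear must be
adjacent to an earlier vertex, so it is `p`. Hence the histories rooted at `v` are the
interleavings starting with `v` of such pairs; writing `h_S(r)` for the number of histories of
`S` rooted at `r`, there are `h_A(v) h_{Aᶜ}(p) C(n-1, m-1)` of them. Symmetrically there are
`h_A(v) h_{Aᶜ}(p) C(n-1, n-m-1)` histories rooted at `p`, and `C(n-1, m-1) (n-m) = C(n-1, m) m`.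
-/

open scoped Classical
open SimpleGraph Finset

variable {V : Type*}

namespace List

variable {α : Type*} [DecidableEq α]

def interleavings : List α → List α → Finset (List α)
  | [], ys => {ys}
  | x :: xs, [] => {x :: xs}
  | x :: xs, y :: ys =>
      (interleavings xs (y :: ys)).image (x :: ·) ∪ (interleavings (x :: xs) ys).image (y :: ·)
termination_by xs ys => xs.length + ys.length

@[simp] lemma interleavings_nil_left (ys : List α) : interleavings [] ys = {ys} := by
  rw [interleavings]

@[simp] lemma interleavings_nil_right (xs : List α) : interleavings xs [] = {xs} := by
  cases xs <;> rw [interleavings]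

lemma mem_interleavings_iff {A : Set α} [DecidablePred (· ∈ A)] {xs ys l : List α}
    (hxs : ∀ x ∈ xs, x ∈ A) (hys : ∀ y ∈ ys, y ∉ A) :
    l ∈ interleavings xs ys ↔ l.filter (· ∈ A) = xs ∧ l.filter (· ∈ Aᶜ) = ys := by
  induction xs, ys using interleavings.induct generalizing l with
  | case1 ys =>
    rw [interleavings_nil_left, Finset.mem_singleton]
    constructor
    · rintro rfl
      simp_all [filter_eq_nil_iff, filter_eq_self]
    · rintro ⟨h, rfl⟩
      exact (filter_eq_self.mpr fun a ha => by simpa using filter_eq_nil_iff.mp h a ha).symm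
  | case2 x xs =>
    rw [interleavings, Finset.mem_singleton]
    constructor
    · rintro rfl
      simp_all [filter_eq_nil_iff, filter_eq_self]
    · rintro ⟨h', h⟩
      rw [← h']
      exact (filter_eq_self.mpr fun a ha => by simpa using filter_eq_nil_iff.mp h a ha).symm
  | case3 x xs y ys ih₁ ih₂ =>
    have hx : x ∈ A := hxs x (by simp)
    have hy : y ∉ A := hys y (by simp)
    rw [interleavings]
    cases l with
    | nil => simp
    | cons z l =>
      by_cases hz : z ∈ A
      · have hyz : y ≠ z := by rintro rfl; exact hy hz
        simp only [Finset.mem_union, Finset.mem_image, cons.injEq, hyz, false_and, and_false,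
          exists_const, or_false, exists_eq_right_right, ih₁ (fun a ha => hxs a (by simp [ha])) hys,
          filter_cons_of_pos (p := (· ∈ A)) (decide_eq_true hz),
          filter_cons_of_neg (p := (· ∈ Aᶜ)) (by simpa using hz)]
        tauto
      · have hxz : x ≠ z := by rintro rfl; exact hz hx
        simp only [Finset.mem_union, Finset.mem_image, cons.injEq, hxz, false_and, and_false,
          exists_const, false_or, exists_eq_right_right, ih₂ hxs (fun a ha => hys a (by simp [ha])),
          filter_cons_of_neg (p := (· ∈ A)) (by simpa using hz),
          filter_cons_of_pos (p := (· ∈ Aᶜ)) (decide_eq_true hz)]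
        tauto


lemma disjoint_interleavings {A : Set α} [DecidablePred (· ∈ A)] {xs ys xs' ys' : List α}
    (hxs : ∀ x ∈ xs, x ∈ A) (hys : ∀ y ∈ ys, y ∉ A) (hxs' : ∀ x ∈ xs', x ∈ A)
    (hys' : ∀ y ∈ ys', y ∉ A) (hne : (xs, ys) ≠ (xs', ys')) :
    _root_.Disjoint (interleavings xs ys) (interleavings xs' ys') := by
  refine Finset.disjoint_left.mpr fun l hl hl' => hne ?_
  obtain ⟨rfl, rfl⟩ := (mem_interleavings_iff hxs hys).mp hl
  obtain ⟨h₁, h₂⟩ := (mem_interleavings_iff hxs' hys').mp hl'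
  rw [h₁, h₂]

lemma card_interleavings {xs ys : List α} (h : xs.Disjoint ys) :
    (interleavings xs ys).card = (xs.length + ys.length).choose xs.length := by
  induction xs, ys using interleavings.induct with
  | case1 ys => simp
  | case2 x xs => simp
  | case3 x xs y ys ih₁ ih₂ =>
    have hxy : x ≠ y := fun e => h (mem_cons_self (a := x)) (e ▸ mem_cons_self)
    have hdisj : _root_.Disjoint ((interleavings xs (y :: ys)).image (x :: ·))
        ((interleavings (x :: xs) ys).image (y :: ·)) := by
      simp only [Finset.disjoint_left, Finset.mem_image]
      rintro _ ⟨l₁, -, rfl⟩ ⟨l₂, -, he⟩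
      exact hxy (cons_eq_cons.mp he).1.symm
    rw [interleavings, Finset.card_union_of_disjoint hdisj,
      Finset.card_image_of_injective _ cons_injective,
      Finset.card_image_of_injective _ cons_injective,
      ih₁ (disjoint_cons_left.mp h).2, ih₂ (disjoint_cons_right.mp h).2]
    simp only [length_cons]
    rw [show xs.length + 1 + (ys.length + 1) = xs.length + ys.length + 1 + 1 by omega,
      Nat.choose_succ_succ, show xs.length + 1 + ys.length = xs.length + ys.length + 1 by omega,
      Nat.add_succ]

lemma filter_head?_interleavings_cons {x : α} {xs ys : List α} (hx : x ∉ ys) :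
    (interleavings (x :: xs) ys).filter (·.head? = some x) =
      (interleavings xs ys).image (x :: ·) := by
  cases ys with
  | nil => simp
  | cons y ys =>
    have hxy : y ≠ x := fun e => hx (e ▸ mem_cons_self)
    rw [interleavings, Finset.filter_union, Finset.filter_true_of_mem, Finset.filter_false_of_mem,
      Finset.union_empty]
    · simp [hxy]
    · simp

lemma card_filter_head?_interleavings_cons {x : α} {xs ys : List α} (h : (x :: xs).Disjoint ys) :
    ((interleavings (x :: xs) ys).filter (·.head? = some x)).card =
      (xs.length + ys.length).choose xs.length := by
  rw [filter_head?_interleavings_cons (disjoint_cons_left.mp h).1,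
    Finset.card_image_of_injective _ cons_injective, card_interleavings (disjoint_cons_left.mp h).2]

end List

namespace SimpleGraph

section ExitsOnlyVia

variable {G : SimpleGraph V} {A S : Set V} {v p : V}

def ExitsOnlyVia (G : SimpleGraph V) (A : Set V) (v p : V) : Prop :=
  ∀ ⦃x y : V⦄, G.Adj x y → x ∈ A → y ∉ A → x = v ∧ y = p

lemma ExitsOnlyVia.compl (h : ExitsOnlyVia G A v p) : ExitsOnlyVia G Aᶜ p v :=
  fun _ _ hxy hx hy => (h hxy.symm (not_not.mp hy) hx).symm

lemma ExitsOnlyVia.mem_support_of_walk (h : ExitsOnlyVia G A v p) {y x : V} (q : G.Walk y x)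
    (hy : y ∉ A) (hx : x ∈ A) : v ∈ q.support := by
  induction q with
  | nil => exact absurd hx hy
  | @cons a b c hab q ih =>
    by_cases hb : b ∈ A
    · obtain ⟨rfl, -⟩ := h hab.symm hb hy
      simp
    · simp [ih hb hx]

lemma ExitsOnlyVia.support_subset_of_isPath (h : ExitsOnlyVia G A v p) {w x : V}
    {q : G.Walk w x} (hq : q.IsPath) (hw : w ∈ A) (hx : x ∈ A) : ∀ y ∈ q.support, y ∈ A := by
  induction q with
  | nil => simpa using hw
  | @cons a b c hab q ih =>
    rw [Walk.cons_isPath_iff] at hq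
    by_cases hb : b ∈ A
    · simpa [hw] using ih hq.1 hb hx
    · obtain ⟨rfl, -⟩ := h hab hw hb
      exact absurd (h.mem_support_of_walk q hb hx) hq.2

lemma ExitsOnlyVia.connected_induce_inter (h : ExitsOnlyVia G A v p)
    (hS : (G.induce S).Connected) (hne : (S ∩ A).Nonempty) :
    (G.induce (S ∩ A)).Connected := by
  rw [connected_iff]
  refine ⟨fun w z => ?_, hne.to_subtype⟩
  obtain ⟨q⟩ := hS.preconnected ⟨w, w.2.1⟩ ⟨z, z.2.1⟩
  have hqS : ∀ y ∈ (q.map (Embedding.induce S).toHom).support, y ∈ S := by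
    simp only [Walk.support_map, List.mem_map]
    rintro _ ⟨y, -, rfl⟩
    exact y.2
  let r : G.Path w z := (q.map (Embedding.induce S).toHom).toPath
  have hrS : ∀ y ∈ (r : G.Walk w z).support, y ∈ S := fun y hy =>
    hqS y (Walk.support_toPath_subset_support _ hy)
  have hrA := h.support_subset_of_isPath r.2 w.2.2 z.2.2
  exact ((r : G.Walk w z).induce (S ∩ A) fun y hy => ⟨hrS y hy, hrA y hy⟩).reachable

end ExitsOnlyVia

section Histories

variable {G : SimpleGraph V} {A : Set V} {v p r : V} {l l' : List V}

def PrefixConnected (G : SimpleGraph V) (l : List V) : Prop :=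
  ∀ l' : List V, l' <+: l → l' ≠ [] → (G.induce {x | x ∈ l'}).Connected

/-- A history of the induced subgraph `G[s]` rooted at `r`, as a list of vertices of `G`. -/
structure IsHistoryOn (G : SimpleGraph V) (s : Set V) (r : V) (l : List V) : Prop where
  head?_eq : l.head? = some r
  nodup : l.Nodup
  mem_iff : ∀ x, x ∈ l ↔ x ∈ s
  prefixConnected : PrefixConnected G l

noncomputable def nHistOn (G : SimpleGraph V) (s : Set V) (r : V) : ℕ :=
  Nat.card {l : List V // IsHistoryOn G s r l}

lemma isHistory_and_head?_eq_iff :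
    IsHistory G l ∧ l.head? = some r ↔ IsHistoryOn G Set.univ r l := by
  constructor
  · rintro ⟨⟨hnd, hall, hpc⟩, hhead⟩
    refine ⟨hhead, hnd, by simpa using hall, fun l' hl' hne => ?_⟩
    rw [List.prefix_iff_eq_take.mp hl']
    exact hpc _ (List.length_pos_iff.mpr hne)
  · rintro ⟨hhead, hnd, hmem, hpc⟩
    refine ⟨⟨hnd, by simpa using hmem, fun k hk => hpc _ (List.take_prefix k l) ?_⟩, hhead⟩
    obtain ⟨t, rfl⟩ := List.head?_eq_some_iff.mp hhead
    cases k <;> simp_all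

lemma nHist_eq_nHistOn_univ : nHist G r = nHistOn G Set.univ r :=
  Nat.card_congr (Equiv.subtypeEquivRight fun _ => isHistory_and_head?_eq_iff)

lemma PrefixConnected.filter [DecidablePred (· ∈ A)] (h : ExitsOnlyVia G A v p)
    (hl : PrefixConnected G l) : PrefixConnected G (l.filter (· ∈ A)) := by
  intro l' hl' hne
  obtain ⟨l'', hpre, rfl⟩ := List.prefix_filter_iff.mp hl'
  have hset : {x | x ∈ l''.filter (· ∈ A)} = {x | x ∈ l''} ∩ A := by ext; simp
  obtain ⟨x, hx⟩ := List.exists_mem_of_ne_nil _ hne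
  rw [hset]
  exact h.connected_induce_inter (hl l'' hpre (List.ne_nil_of_mem (List.mem_of_mem_filter hx)))
    ⟨x, by simpa [hset] using hx⟩

lemma PrefixConnected.filter_eq_nil_or [DecidablePred (· ∈ A)]
    (hpc : PrefixConnected G (l.filter (· ∈ A))) (hr : (l.filter (· ∈ A)).head? = some r)
    (hl' : l' <+: l) : l'.filter (· ∈ A) = [] ∨
      (G.induce {x | x ∈ l'.filter (· ∈ A)}).Connected ∧ r ∈ l'.filter (· ∈ A) := by
  refine or_iff_not_imp_left.mpr fun hne => ⟨hpc _ (hl'.filter _) hne, ?_⟩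
  obtain ⟨t, ht⟩ := hl'.filter (· ∈ A)
  obtain ⟨a, l'', he⟩ := List.ne_nil_iff_exists_cons.mp hne
  rw [← ht, he, List.cons_append, List.head?_cons, Option.some.injEq] at hr
  rw [he, ← hr]
  exact List.mem_cons_self

lemma PrefixConnected.of_filter [DecidablePred (· ∈ A)]
    (hA : PrefixConnected G (l.filter (· ∈ A))) (hB : PrefixConnected G (l.filter (· ∈ Aᶜ)))
    (hv : (l.filter (· ∈ A)).head? = some v) (hp : (l.filter (· ∈ Aᶜ)).head? = some p)
    (hvp : G.Adj v p) : PrefixConnected G l := by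
  intro l' hl' hne
  have hset : {x | x ∈ l'} = {x | x ∈ l'.filter (· ∈ A)} ∪ {x | x ∈ l'.filter (· ∈ Aᶜ)} := by
    ext x; by_cases hx : x ∈ A <;> simp [hx]
  have hnil : {x : V | x ∈ ([] : List V)} = ∅ := by simp
  rw [hset]
  rcases hA.filter_eq_nil_or hv hl' with h₁ | ⟨c₁, hv₁⟩ <;>
    rcases hB.filter_eq_nil_or hp hl' with h₂ | ⟨c₂, hp₂⟩
  · obtain ⟨x, hx⟩ := List.exists_mem_of_ne_nil _ hne
    have : x ∈ l'.filter (· ∈ A) ∨ x ∈ l'.filter (· ∈ Aᶜ) := by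
      by_cases hxA : x ∈ A <;> simp [hx, hxA]
    rw [h₁, h₂] at this
    simp at this
  · rwa [h₁, hnil, Set.empty_union]
  · rwa [h₂, hnil, Set.union_empty]
  · exact connected_induce_union c₁.preconnected c₂.preconnected hv₁ hp₂ hvp

lemma ExitsOnlyVia.eq_of_prefixConnected (h : ExitsOnlyVia G A v p) {l₁ l₂ : List V} {b : V}
    (hl : PrefixConnected G (l₁ ++ b :: l₂)) (hl₁ : ∀ x ∈ l₁, x ∈ A) (hne : l₁ ≠ [])
    (hb : b ∉ A) : b = p := by
  have hconn := hl (l₁ ++ [b]) (by simp) (by simp)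
  obtain ⟨a, ha⟩ := List.exists_mem_of_ne_nil _ hne
  have : Nontrivial {x | x ∈ l₁ ++ [b]} :=
    ⟨⟨a, by simp [ha]⟩, ⟨b, by simp⟩, fun hab => hb (Subtype.mk.inj hab ▸ hl₁ a ha)⟩
  obtain ⟨⟨y, hy⟩, hby⟩ := hconn.preconnected.exists_adj_of_nontrivial ⟨b, by simp⟩
  have hyb : y ≠ b := fun e => hby.ne (Subtype.ext e.symm)
  have hyl₁ : y ∈ l₁ := by simpa [hyb] using hy
  exact (h hby.symm (hl₁ y hyl₁) hb).2

theorem ExitsOnlyVia.isHistoryOn_univ_iff [DecidablePred (· ∈ A)] (h : ExitsOnlyVia G A v p)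
    (hv : v ∈ A) (hp : p ∉ A) (hvp : G.Adj v p) :
    IsHistoryOn G Set.univ v l ↔ l.head? = some v ∧
      IsHistoryOn G A v (l.filter (· ∈ A)) ∧ IsHistoryOn G Aᶜ p (l.filter (· ∈ Aᶜ)) := by
  constructor
  · rintro ⟨hhead, hnd, hmem, hpc⟩
    obtain ⟨t, rfl⟩ := List.head?_eq_some_iff.mp hhead
    obtain ⟨b, bs, hb⟩ := List.ne_nil_iff_exists_cons.mp <| List.ne_nil_of_mem <|
      (List.mem_filter (p := (· ∈ Aᶜ))).mpr ⟨(hmem p).mpr trivial, decide_eq_true hp⟩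
    obtain ⟨l₁, l₂, hl, hl₁, hbA, -⟩ := List.filter_eq_cons_iff.mp hb
    have hl₁ne : l₁ ≠ [] := by
      rintro rfl
      obtain rfl : v = b := (List.cons.inj hl).1
      simp [hv] at hbA
    have hbp : b = p := h.eq_of_prefixConnected (hl ▸ hpc) (fun x hx => by simpa using hl₁ x hx)
      hl₁ne (by simpa using hbA)
    exact ⟨rfl, ⟨by simp [hv], hnd.filter _, by simp [hmem], hpc.filter h⟩,
      ⟨by rw [hb, hbp]; rfl, hnd.filter _, by simp [hmem], hpc.filter h.compl⟩⟩
  · rintro ⟨hhead, hA, hB⟩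
    refine ⟨hhead, List.nodup_iff_count_le_one.mpr fun x => ?_, fun x => ?_,
      hA.prefixConnected.of_filter hB.prefixConnected hA.head?_eq hB.head?_eq hvp⟩
    · by_cases hx : x ∈ A
      · rw [← List.count_filter (p := (· ∈ A)) (decide_eq_true hx)]
        exact List.nodup_iff_count_le_one.mp hA.nodup x
      · rw [← List.count_filter (p := (· ∈ Aᶜ)) (decide_eq_true hx)]
        exact List.nodup_iff_count_le_one.mp hB.nodup x
    · by_cases hx : x ∈ A
      · simpa [hx] using hA.mem_iff x
      · simpa [hx] using hB.mem_iff x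

end Histories

section Counting

variable {G : SimpleGraph V} {A s : Set V} {v p r : V} {l : List V}

lemma IsHistoryOn.length_eq (h : IsHistoryOn G s r l) : l.length = s.ncard := by
  have hs : s = ↑l.toFinset := by ext x; simp [h.mem_iff]
  rw [hs, Set.ncard_coe_finset, List.toFinset_card_of_nodup h.nodup]

lemma finite_setOf_isHistoryOn [Finite V] : {l | IsHistoryOn G s r l}.Finite :=
  (List.finite_length_eq V s.ncard).subset fun _ h => h.length_eq

noncomputable def historiesOn [Finite V] (G : SimpleGraph V) (s : Set V) (r : V) :
    Finset (List V) :=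
  (finite_setOf_isHistoryOn (G := G) (s := s) (r := r)).toFinset

@[simp] lemma mem_historiesOn [Finite V] : l ∈ historiesOn G s r ↔ IsHistoryOn G s r l :=
  Set.Finite.mem_toFinset _

lemma card_historiesOn [Finite V] : (historiesOn G s r).card = nHistOn G s r :=
  (Nat.card_eq_card_finite_toFinset _).symm

theorem ExitsOnlyVia.historiesOn_univ_eq_biUnion [Finite V] (h : ExitsOnlyVia G A v p)
    (hv : v ∈ A) (hp : p ∉ A) (hvp : G.Adj v p) :
    historiesOn G Set.univ v = (historiesOn G A v ×ˢ historiesOn G Aᶜ p).biUnion fun ab =>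
      (List.interleavings ab.1 ab.2).filter (·.head? = some v) := by
  ext l
  simp only [mem_historiesOn, h.isHistoryOn_univ_iff hv hp hvp, Finset.mem_biUnion,
    Finset.mem_product, Finset.mem_filter, Prod.exists]
  constructor
  · rintro ⟨hhead, ha, hb⟩
    refine ⟨_, _, ⟨ha, hb⟩, ?_, hhead⟩
    exact (List.mem_interleavings_iff (ha.mem_iff · |>.mp) (hb.mem_iff · |>.mp)).mpr ⟨rfl, rfl⟩
  · rintro ⟨a, b, ⟨ha, hb⟩, hl, hhead⟩
    obtain ⟨rfl, rfl⟩ :=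
      (List.mem_interleavings_iff (ha.mem_iff · |>.mp) (hb.mem_iff · |>.mp)).mp hl
    exact ⟨hhead, ha, hb⟩

theorem ExitsOnlyVia.nHistOn_univ_eq [Finite V] (h : ExitsOnlyVia G A v p) (hv : v ∈ A)
    (hp : p ∉ A) (hvp : G.Adj v p) :
    nHistOn G Set.univ v =
      nHistOn G A v * nHistOn G Aᶜ p * (Nat.card V - 1).choose (A.ncard - 1) := by
  set T := fun ab : List V × List V => (List.interleavings ab.1 ab.2).filter (·.head? = some v)
  have hdisj : Set.PairwiseDisjoint (historiesOn G A v ×ˢ historiesOn G Aᶜ p : Finset _) T := by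
    rintro ⟨a, b⟩ hab ⟨a', b'⟩ hab' hne
    simp only [Finset.coe_product, Set.mem_prod, Finset.mem_coe, mem_historiesOn] at hab hab'
    exact Finset.disjoint_filter_filter <| List.disjoint_interleavings
      (hab.1.mem_iff · |>.mp) (hab.2.mem_iff · |>.mp) (hab'.1.mem_iff · |>.mp)
      (hab'.2.mem_iff · |>.mp) hne
  have hcard : ∀ ab ∈ historiesOn G A v ×ˢ historiesOn G Aᶜ p,
      (T ab).card = (Nat.card V - 1).choose (A.ncard - 1) := by
    rintro ⟨a, b⟩ hab
    obtain ⟨ha, hb⟩ : IsHistoryOn G A v a ∧ IsHistoryOn G Aᶜ p b := by simpa using hab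
    obtain ⟨xs, rfl⟩ := List.head?_eq_some_iff.mp ha.head?_eq
    have hlen := A.ncard_add_ncard_compl
    rw [← ha.length_eq, ← hb.length_eq, List.length_cons] at hlen
    rw [List.card_filter_head?_interleavings_cons
      fun x hx hx' => (hb.mem_iff x).mp hx' ((ha.mem_iff x).mp hx), ← ha.length_eq,
      List.length_cons, ← hlen]
    congr 1
    omega
  rw [← card_historiesOn, h.historiesOn_univ_eq_biUnion hv hp hvp, Finset.card_biUnion hdisj,
    Finset.sum_congr rfl hcard, Finset.sum_const, smul_eq_mul, Finset.card_product,
    card_historiesOn, card_historiesOn]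

end Counting

section Subtree

variable {G : SimpleGraph V} {u v p : V}

def subtree (G : SimpleGraph V) (u v : V) : Set V := {w | ∀ q : G.Walk w u, v ∈ q.support}

lemma subtreeSize_eq_ncard_subtree : subtreeSize G u v = (subtree G u v).ncard :=
  Nat.card_coe_set_eq _

lemma mem_subtree_self : v ∈ subtree G u v := fun q => q.start_mem_support

lemma Connected.exists_walk_notMem_support (hconn : G.Connected) (hpv : p ≠ v)
    (hparent : ∀ q : G.Walk v u, p ∈ q.support) : ∃ q : G.Walk p u, v ∉ q.support := by
  obtain ⟨r, hr⟩ := (hconn.preconnected u p).some.toPath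
  refine ⟨r.reverse, fun hv => ?_⟩
  rw [Walk.support_reverse, List.mem_reverse] at hv
  exact Walk.endpoint_notMem_support_takeUntil hr hv hpv
    (by simpa using hparent (r.takeUntil v hv).reverse)

lemma Connected.notMem_subtree (hconn : G.Connected) (hpv : p ≠ v)
    (hparent : ∀ q : G.Walk v u, p ∈ q.support) : p ∉ subtree G u v := fun h => by
  obtain ⟨q, hq⟩ := hconn.exists_walk_notMem_support hpv hparent
  exact hq (h q)

lemma IsTree.exitsOnlyVia_subtree (hG : G.IsTree) (hadj : G.Adj p v)
    (hparent : ∀ q : G.Walk v u, p ∈ q.support) : ExitsOnlyVia G (subtree G u v) v p := by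
  intro x y hxy hx hy
  obtain ⟨qy, hqy⟩ : ∃ q : G.Walk y u, v ∉ q.support := by simpa [subtree] using hy
  obtain rfl : x = v := by simpa [hqy, eq_comm] using hx (qy.cons hxy)
  obtain ⟨qp, hqp⟩ := hG.connected.exists_walk_notMem_support hadj.ne hparent
  have hpaths := (hG.existsUnique_path x u).unique
    (qy.toPath.2.cons (h := hxy) fun h => hqy (qy.support_toPath_subset_support h))
    (qp.toPath.2.cons (h := hadj.symm) fun h => hqp (qp.support_toPath_subset_support h))
  exact ⟨rfl, by simpa using congrArg Walk.snd hpaths⟩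

end Subtree

end SimpleGraph

lemma Nat.choose_add_succ_mul_succ (m k : ℕ) :
    (m + k + 1).choose m * (k + 1) = (m + k + 1).choose k * (m + 1) := by
  have h := Nat.choose_succ_right_eq (m + k + 1) m
  rw [show m + k + 1 = m + 1 + k by omega, Nat.choose_symm_add] at h
  rw [show m + k + 1 = m + 1 + k by omega, h]
  congr 1
  omega

theorem stmt1_general [Fintype V] (G : SimpleGraph V) (hG : G.IsTree) (u v p : V)
    (hadj : G.Adj p v)
    (hparent : ∀ q : G.Walk v u, p ∈ q.support) :
    nHist G v * (Fintype.card V - subtreeSize G u v) =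
      nHist G p * subtreeSize G u v := by
  set A := subtree G u v
  have hcut : ExitsOnlyVia G A v p := hG.exitsOnlyVia_subtree hadj hparent
  have hv : v ∈ A := mem_subtree_self
  have hp : p ∉ A := hG.connected.notMem_subtree hadj.ne hparent
  obtain ⟨m, hm⟩ : ∃ m, A.ncard = m + 1 :=
    ⟨_, (Nat.succ_pred_eq_of_pos ((Set.ncard_pos A.toFinite).mpr ⟨v, hv⟩)).symm⟩
  obtain ⟨k, hk⟩ : ∃ k, Aᶜ.ncard = k + 1 :=
    ⟨_, (Nat.succ_pred_eq_of_pos ((Set.ncard_pos Aᶜ.toFinite).mpr ⟨p, hp⟩)).symm⟩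
  have hn : Fintype.card V = m + k + 2 := by
    rw [← Nat.card_eq_fintype_card, ← A.ncard_add_ncard_compl, hm, hk]
    ring
  rw [subtreeSize_eq_ncard_subtree, nHist_eq_nHistOn_univ, nHist_eq_nHistOn_univ,
    hcut.nHistOn_univ_eq hv hp hadj.symm, hcut.compl.nHistOn_univ_eq hp (not_not.mpr hv) hadj,
    compl_compl, Nat.card_eq_fintype_card, hn, hm, hk]
  rw [show m + k + 2 - (m + 1) = k + 1 by omega, show m + k + 2 - 1 = m + k + 1 by omega,
    Nat.add_sub_cancel, Nat.add_sub_cancel, mul_assoc, Nat.choose_add_succ_mul_succ]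
  ring

theorem stmt1 [Fintype V] (G : SimpleGraph V) (hG : G.IsTree) (u v p : V)
    (hvu : v ≠ u) (hadj : G.Adj p v)
    (hparent : ∀ q : G.Walk v u, p ∈ q.support) :
    nHist G v * (Fintype.card V - subtreeSize G u v) =
      nHist G p * subtreeSize G u v :=
  stmt1_general G hG u v p hadj hparent
end

section
/- Let (T_n) be a Markovian tree growth process on recursive trees whose conditional distribution of the full history given the final tree T_n is well-defined. If the process is shape exchangeable—i.e., P(T_n = t) = P(T_n = t') whenever recursive trees t and t' are isomorphic as unlabeled trees—then for any recursive tree t_n with positive probability, the conditional distribution of the history (T_1, ..., T_{n-1}) given T_n = t_n is uniform over the set of all histories compatible with t_n, each having probability 1/#hist(t_n) where #hist(t_n) is the number of orderings of the vertices of t_n such that every prefix induces a connected subgraph. -/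
open scoped Classical
open SimpleGraph Finset

/-- A recursive tree on `Fin n`: a tree such that the nodes `{0, ..., k-1}` induce a
connected subgraph for every `k ≥ 1`. Node `0` is the root (first arrival). -/
def IsRecursive (n : ℕ) (G : SimpleGraph (Fin n)) : Prop :=
  G.IsTree ∧ ∀ k : ℕ, 1 ≤ k → (G.induce {i : Fin n | i.val < k}).Connected

/-- A history of the labeled tree `t`: a pair of a recursive tree `G` together with an
isomorphism (relabeling) carrying `G` onto `t`. -/
def Histories (n : ℕ) (t : SimpleGraph (Fin n)) : Type :=
  {p : Σ G : SimpleGraph (Fin n), G ≃g t // IsRecursive n p.1}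

/-!
All histories of `t` are recursive trees isomorphic to `t`, hence to each other, so shape
exchangeability gives them one common weight `c`. The total weight is then `#hist(t) * c`, and the
normalisation by `n!` cancels.
-/

instance (n : ℕ) (t : SimpleGraph (Fin n)) : Finite (Histories n t) := by
  have (G : SimpleGraph (Fin n)) : Finite (G ≃g t) := .of_injective _ RelIso.toEquiv_injective
  unfold Histories
  infer_instance

theorem finsum_div_const {α : Type*} (f : α → ℝ) (d : ℝ) :
    ∑ᶠ a, f a / d = (∑ᶠ a, f a) / d := by
  simp_rw [div_eq_mul_inv, finsum_mul]

theorem finsum_eq_card_mul_of_forall_eq {α : Type*} [Finite α] {f : α → ℝ} {c : ℝ}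
    (hf : ∀ a, f a = c) : ∑ᶠ a, f a = Nat.card α * c := by
  have := Fintype.ofFinite α
  rw [finsum_eq_sum_of_fintype, Finset.sum_congr rfl fun a _ => hf a, Finset.sum_const,
    Finset.card_univ, Nat.card_eq_fintype_card, nsmul_eq_mul]

theorem div_finsum_eq_one_div_card_of_forall_eq {α : Type*} [Finite α] {f : α → ℝ} {c : ℝ}
    (hf : ∀ a, f a = c) (hpos : 0 < ∑ᶠ a, f a) (a : α) :
    f a / ∑ᶠ b, f b = 1 / Nat.card α := by
  rw [finsum_eq_card_mul_of_forall_eq hf] at hpos ⊢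
  have hc : c ≠ 0 := by rintro rfl; simp at hpos
  rw [hf a, mul_comm, ← div_div, div_self hc]

theorem Histories.apply_eq_of_iso_invariant {n : ℕ} {t : SimpleGraph (Fin n)}
    {P : SimpleGraph (Fin n) → ℝ}
    (hexch : ∀ G G' : SimpleGraph (Fin n), IsRecursive n G → IsRecursive n G' →
      Nonempty (G ≃g G') → P G = P G')
    (h h' : Histories n t) : P h'.1.1 = P h.1.1 :=
  hexch _ _ h'.2 h.2 ⟨h'.1.2.trans h.1.2.symm⟩

theorem stmt3_general (n : ℕ) (P : SimpleGraph (Fin n) → ℝ)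
    (hexch : ∀ G G' : SimpleGraph (Fin n), IsRecursive n G → IsRecursive n G' →
      Nonempty (G ≃g G') → P G = P G')
    (t : SimpleGraph (Fin n)) (h : Histories n t)
    (htot : 0 < ∑ᶠ h' : Histories n t, P h'.1.1) :
    (P h.1.1 / (Nat.factorial n : ℝ)) /
        (∑ᶠ h' : Histories n t, P h'.1.1 / (Nat.factorial n : ℝ)) =
      1 / (Nat.card (Histories n t) : ℝ) := by
  have hfac : (Nat.factorial n : ℝ) ≠ 0 := by positivity
  rw [finsum_div_const, div_div_div_cancel_right₀ hfac]
  exact div_finsum_eq_one_div_card_of_forall_eq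
    (Histories.apply_eq_of_iso_invariant hexch h) htot h

theorem stmt3 (n : ℕ) (hn : 1 ≤ n) (P : SimpleGraph (Fin n) → ℝ)
    (hP0 : ∀ G, 0 ≤ P G)
    (hexch : ∀ G G' : SimpleGraph (Fin n), IsRecursive n G → IsRecursive n G' →
      Nonempty (G ≃g G') → P G = P G')
    (t : SimpleGraph (Fin n)) (h : Histories n t)
    (htot : 0 < ∑ᶠ h' : Histories n t, P h'.1.1) :
    (P h.1.1 / (Nat.factorial n : ℝ)) /
        (∑ᶠ h' : Histories n t, P h'.1.1 / (Nat.factorial n : ℝ)) =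
      1 / (Nat.card (Histories n t) : ℝ) :=
  stmt3_general n P hexch t h htot
end

section
/- Let T_n be a random recursive tree, Π a uniformly random bijection from [n] to an alphabet U_n independent of T_n, and T̃_n = Π T_n the randomly relabeled tree. Let B_ε be any labeling-equivariant set-valued function of labeled trees (i.e., τ B_ε(t) = B_ε(τ t) for every bijection τ of U_n) such that for every labeled tree t with vertex set U_n, P(Π(1) ∈ B_ε(T̃_n) | T̃_n = t) ≥ 1 - ε. Then for any isomorphism ρ: [n] → U_n with ρ T_n = T*_n, the frequentist coverage P(ρ(1) ∈ B_ε(T*_n)) ≥ 1 - ε holds. -/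
open scoped Classical
open SimpleGraph Finset

/-!
Relabeling-equivariance of `B` makes the event `π 0 ∈ B (π G)` independent of `π`, so the
frequentist coverage of the root equals `P {G | 0 ∈ B G}`, whatever isomorphism `ρ` is used.
Summing the conditional (credibility) inequality over all observed trees `t` turns the left side
into `(1 - ε) · n!` and the right side into `n! · P {G | 0 ∈ B G}`.
-/

theorem Equiv.Perm.apply_mem_of_image_eq_map {V : Type*} [DecidableEq V]
    {B : SimpleGraph V → Finset V}
    (hB : ∀ (τ : Equiv.Perm V) (t : SimpleGraph V), (B t).image τ = B (t.map τ.toEmbedding))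
    (τ : Equiv.Perm V) (G : SimpleGraph V) (v : V) :
    τ v ∈ B (G.map τ.toEmbedding) ↔ v ∈ B G := by
  rw [← hB, τ.injective.mem_finset_image]

theorem Finset.sum_sum_ite_apply_eq_and {α β M : Type*} [Fintype β] [DecidableEq β]
    [AddCommMonoid M] (s : Finset α) (f : α → β) (q : α → β → Prop)
    [∀ a t, Decidable (q a t)] (w : α → M) :
    ∑ t, ∑ a ∈ s, (if f a = t ∧ q a t then w a else 0) =
      ∑ a ∈ s, if q a (f a) then w a else 0 := by
  rw [Finset.sum_comm]
  refine Finset.sum_congr rfl fun a _ => ?_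
  simp only [ite_and, Finset.sum_ite_eq, Finset.mem_univ, if_true]

theorem Finset.sum_sum_ite_apply_eq {α β M : Type*} [Fintype β] [DecidableEq β]
    [AddCommMonoid M] (s : Finset α) (f : α → β) (w : α → M) :
    ∑ t, ∑ a ∈ s, (if f a = t then w a else 0) = ∑ a ∈ s, w a := by
  simpa using Finset.sum_sum_ite_apply_eq_and s f (fun _ _ => True) w

theorem stmt8_general (n : ℕ) (hn : 0 < n) (ε : ℝ)
    (P : SimpleGraph (Fin n) → ℝ)
    (hP1 : ∑ G, P G = 1)
    (B : SimpleGraph (Fin n) → Finset (Fin n))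
    (hequiv : ∀ (τ : Equiv.Perm (Fin n)) (t : SimpleGraph (Fin n)),
      (B t).image τ = B (t.map τ.toEmbedding))
    (hcred : ∀ t : SimpleGraph (Fin n),
      (1 - ε) * (∑ G, ∑ π : Equiv.Perm (Fin n),
          if G.map π.toEmbedding = t then P G else 0) ≤
        ∑ G, ∑ π : Equiv.Perm (Fin n),
          if G.map π.toEmbedding = t ∧ π ⟨0, hn⟩ ∈ B t then P G else 0)
    (ρ : SimpleGraph (Fin n) → Equiv.Perm (Fin n)) :
    1 - ε ≤ ∑ G, if ρ G ⟨0, hn⟩ ∈ B (G.map (ρ G).toEmbedding) then P G else 0 := by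
  set root : Fin n := ⟨0, hn⟩
  set N : ℝ := (Fintype.card (Equiv.Perm (Fin n)) : ℝ) with hN
  have hroot := Equiv.Perm.apply_mem_of_image_eq_map hequiv
  have htotal : ∑ t, ∑ G, ∑ π : Equiv.Perm (Fin n),
      (if G.map π.toEmbedding = t then P G else 0) = N := by
    rw [Finset.sum_comm]
    simp only [Finset.sum_sum_ite_apply_eq, Finset.sum_const, Finset.card_univ, nsmul_eq_mul,
      ← Finset.mul_sum, hP1, mul_one, ← hN]
  have hcovered : ∑ t, ∑ G, ∑ π : Equiv.Perm (Fin n),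
      (if G.map π.toEmbedding = t ∧ π root ∈ B t then P G else 0) =
        N * ∑ G, if root ∈ B G then P G else 0 := by
    rw [Finset.sum_comm]
    simp only [Finset.sum_sum_ite_apply_eq_and, hroot, Finset.sum_const, Finset.card_univ,
      nsmul_eq_mul, ← Finset.mul_sum, ← hN]
  have hsum := Finset.sum_le_sum fun t (_ : t ∈ Finset.univ) => hcred t
  rw [← Finset.mul_sum, htotal, hcovered, mul_comm (1 - ε)] at hsum
  simp only [hroot]
  exact le_of_mul_le_mul_left hsum (Nat.cast_pos.2 Fintype.card_pos)

theorem stmt8 (n : ℕ) (hn : 0 < n) (ε : ℝ)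
    (P : SimpleGraph (Fin n) → ℝ) (hP0 : ∀ G, 0 ≤ P G)
    (hsupp : ∀ G, P G ≠ 0 → IsRecursive n G)
    (hP1 : ∑ G, P G = 1)
    (B : SimpleGraph (Fin n) → Finset (Fin n))
    (hequiv : ∀ (τ : Equiv.Perm (Fin n)) (t : SimpleGraph (Fin n)),
      (B t).image τ = B (t.map τ.toEmbedding))
    (hcred : ∀ t : SimpleGraph (Fin n),
      (1 - ε) * (∑ G, ∑ π : Equiv.Perm (Fin n),
          if G.map π.toEmbedding = t then P G else 0) ≤
        ∑ G, ∑ π : Equiv.Perm (Fin n),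
          if G.map π.toEmbedding = t ∧ π ⟨0, hn⟩ ∈ B t then P G else 0)
    (ρ : SimpleGraph (Fin n) → Equiv.Perm (Fin n)) :
    1 - ε ≤ ∑ G, if ρ G ⟨0, hn⟩ ∈ B (G.map (ρ G).toEmbedding) then P G else 0 :=
  stmt8_general n hn ε P hP1 B hequiv hcred ρ
end

section
/- Let T_n be a random recursive tree (with arbitrary distribution over recursive trees on [n]), let T̃_n be the randomly relabeled tree, and let t̃_n be a labeled tree on alphabet U_n with P(T̃_n = t̃_n) > 0. Then for any node u ∈ U_n, the conditional probability that u is the root, P(T̃_1 = {u} | T̃_n = t̃_n), equals L(u, t̃_n) / ∑_{v ∈ U_n} L(v, t̃_n), where L(u, t̃_n) = (1/#Eq(u, t̃_n)) ∑_{t ∈ recur(t̃_n, u)} P(T_n = t), recur(t̃_n, u) is the set of recursive trees t such that (t, 1) has the same rooted shape as (t̃_n, u), and Eq(u, t̃_n) is the set of vertices v with (t̃_n, v) having the same rooted shape as (t̃_n, u). -/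
open scoped Classical
open SimpleGraph Finset

/-!
A relabelling `π` carries `G` onto `t` with `π 0 = w` exactly when it is an isomorphism
`G ≃g t` sending the root to `w`. When such isomorphisms exist they form a coset of the
stabiliser of `w` in `Aut t`, so by orbit–stabiliser there are `|Aut t| / |orbit of w|` of
them. Hence the numerator for the root `w` is `|Aut t| · L w`, the denominator is the sum
of these over `w`, and `|Aut t|` cancels.
-/

namespace SimpleGraph

variable {V : Type*} {G t : SimpleGraph V}

lemma map_toEmbedding_eq_iff {π : Equiv.Perm V} :
    G.map π.toEmbedding = t ↔ ∀ a b, t.Adj (π a) (π b) ↔ G.Adj a b := by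
  constructor
  · rintro rfl a b
    exact map_adj_apply
  · intro h
    ext x y
    rw [← π.apply_symm_apply x, ← π.apply_symm_apply y, h]
    exact map_adj_apply (f := π.toEmbedding)

def isoEquivPermMapEq : (G ≃g t) ≃ {π : Equiv.Perm V // G.map π.toEmbedding = t} where
  toFun e := ⟨e.toEquiv, map_toEmbedding_eq_iff.2 fun _ _ => e.map_rel_iff⟩
  invFun π := ⟨π.1, map_toEmbedding_eq_iff.1 π.2 _ _⟩
  left_inv _ := rfl
  right_inv _ := rfl

lemma card_perm_map_eq_and_apply_eq (r w : V) :
    Nat.card {π : Equiv.Perm V // G.map π.toEmbedding = t ∧ π r = w} =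
      Nat.card {e : G ≃g t // e r = w} :=
  Nat.card_congr <| (Equiv.subtypeSubtypeEquivSubtypeInter _ _).symm.trans <|
    isoEquivPermMapEq.symm.subtypeEquiv fun _ => Iff.rfl

def isoApplyEqEquivStabilizer (e₀ : G ≃g t) {r w : V} (h : e₀ r = w) :
    {e : G ≃g t // e r = w} ≃ MulAction.stabilizer (t ≃g t) w where
  toFun e := ⟨e₀.symm.trans e.1, by simp [← h, e.2]⟩
  invFun a := ⟨e₀.trans a.1, by simpa [h] using MulAction.mem_stabilizer_iff.1 a.2⟩
  left_inv e := by ext; simp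
  right_inv a := by ext; simp

lemma card_iso_apply_eq_mul_card_orbit (e₀ : G ≃g t) {r w : V} (h : e₀ r = w) :
    Nat.card {e : G ≃g t // e r = w} * Nat.card {v | ∃ e : t ≃g t, e w = v} =
      Nat.card (t ≃g t) := by
  change _ * Nat.card (MulAction.orbit (t ≃g t) w) = _
  rw [Nat.card_congr (isoApplyEqEquivStabilizer e₀ h), Nat.card_coe_set_eq,
    ← MulAction.index_stabilizer, Subgroup.card_mul_index]

instance [Finite V] : Finite (G ≃g t) :=
  Finite.of_injective _ DFunLike.coe_injective

lemma card_orbit_pos [Finite V] (w : V) : 0 < Nat.card {v | ∃ e : t ≃g t, e w = v} :=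
  have : Nonempty {v | ∃ e : t ≃g t, e w = v} := ⟨⟨w, RelIso.refl _, rfl⟩⟩
  Nat.card_pos

lemma card_orbit_mul_sum_perm [Fintype V] [DecidableEq V] {M : Type*} [CommSemiring M]
    (r w : V) (c : M) :
    Nat.card {v | ∃ e : t ≃g t, e w = v} *
        ∑ π : Equiv.Perm V, (if G.map π.toEmbedding = t ∧ π r = w then c else 0) =
      Nat.card (t ≃g t) * if ∃ e : G ≃g t, e r = w then c else 0 := by
  rw [sum_ite, sum_const_zero, add_zero, sum_const, nsmul_eq_mul,
    ← Fintype.card_subtype, ← Nat.card_eq_fintype_card, card_perm_map_eq_and_apply_eq]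
  split_ifs with h
  · obtain ⟨e₀, h⟩ := h
    rw [← card_iso_apply_eq_mul_card_orbit e₀ h]
    push_cast
    ring
  · have : IsEmpty {e : G ≃g t // e r = w} := ⟨fun e => h ⟨e.1, e.2⟩⟩
    simp

end SimpleGraph

theorem stmt13_general (n : ℕ) (hn : 0 < n) (P : SimpleGraph (Fin n) → ℝ)
    (hsupp : ∀ G, P G ≠ 0 → IsRecursive n G)
    (t : SimpleGraph (Fin n)) (u : Fin n)
    (L : Fin n → ℝ)
    (hL : ∀ w : Fin n,
      L w = (Nat.card {v : Fin n | ∃ e : t ≃g t, e w = v} : ℝ)⁻¹ *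
        ∑ G, if IsRecursive n G ∧ ∃ e : G ≃g t, e ⟨0, hn⟩ = w then P G else 0) :
    (∑ G, ∑ π : Equiv.Perm (Fin n),
        if G.map π.toEmbedding = t ∧ π ⟨0, hn⟩ = u then P G else 0) /
      (∑ G, ∑ π : Equiv.Perm (Fin n),
        if G.map π.toEmbedding = t then P G else 0) =
    L u / ∑ v : Fin n, L v := by
  set r : Fin n := ⟨0, hn⟩
  have hnum : ∀ w, (∑ G, ∑ π : Equiv.Perm (Fin n),
      if G.map π.toEmbedding = t ∧ π r = w then P G else 0) = Nat.card (t ≃g t) * L w := by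
    intro w
    have horbit : (Nat.card {v | ∃ e : t ≃g t, e w = v} : ℝ) ≠ 0 := by
      exact_mod_cast (card_orbit_pos w).ne'
    apply mul_left_cancel₀ horbit
    rw [hL w, mul_left_comm, mul_inv_cancel_left₀ horbit, mul_sum, mul_sum]
    refine sum_congr rfl fun G _ => ?_
    rw [card_orbit_mul_sum_perm]
    by_cases hG : P G = 0
    · simp [hG]
    · simp [hsupp G hG]
  have hden : (∑ G, ∑ π : Equiv.Perm (Fin n), if G.map π.toEmbedding = t then P G else 0) =
      ∑ w, ∑ G, ∑ π : Equiv.Perm (Fin n),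
        if G.map π.toEmbedding = t ∧ π r = w then P G else 0 := by
    rw [eq_comm, sum_comm]
    refine sum_congr rfl fun G _ => ?_
    rw [sum_comm]
    simp [ite_and]
  have hAut : (0 : ℝ) < Nat.card (t ≃g t) := by exact_mod_cast Nat.card_pos
  rw [hden, hnum u, sum_congr rfl fun w _ => hnum w, ← mul_sum, mul_div_mul_left _ _ hAut.ne']

theorem stmt13 (n : ℕ) (hn : 0 < n) (P : SimpleGraph (Fin n) → ℝ)
    (hP0 : ∀ G, 0 ≤ P G) (hsupp : ∀ G, P G ≠ 0 → IsRecursive n G)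
    (hP1 : ∑ G, P G = 1)
    (t : SimpleGraph (Fin n)) (u : Fin n)
    (L : Fin n → ℝ)
    (hL : ∀ w : Fin n,
      L w = (Nat.card {v : Fin n | ∃ e : t ≃g t, e w = v} : ℝ)⁻¹ *
        ∑ G, if IsRecursive n G ∧ ∃ e : G ≃g t, e ⟨0, hn⟩ = w then P G else 0)
    (hpos : 0 < ∑ G, ∑ π : Equiv.Perm (Fin n),
      if G.map π.toEmbedding = t then P G else 0) :
    (∑ G, ∑ π : Equiv.Perm (Fin n),
        if G.map π.toEmbedding = t ∧ π ⟨0, hn⟩ = u then P G else 0) /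
      (∑ G, ∑ π : Equiv.Perm (Fin n),
        if G.map π.toEmbedding = t then P G else 0) =
    L u / ∑ v : Fin n, L v :=
  stmt13_general n hn P hsupp t u L hL
end
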